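/- arXiv:1212.5417 — 2 statements merged into one kernel-verified Lean document; each statement's English description precedes it below -/
import Mathlib

section
/- For all real x₁, y₁, x₂, y₂ with y₁ > 0 and y₂ > 0, if x₁ + x₁/(x₁²+y₁²) = x₂ + x₂/(x₂²+y₂²) and y₁ - y₁/(x₁²+y₁²) = y₂ - y₂/(x₂²+y₂²), then x₁ = x₂ and y₁ = y₂. -/
/-!
Identify `(x, y)` with `z = x + iy`; the two equations say `z + z⁻¹ = w + w⁻¹`, i.e.
`(z - w)(zw - 1) = 0`. The case `zw = 1` is impossible in the upper half-plane,
since inversion maps it to the lower half-plane.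
-/

theorem eq_or_mul_eq_one_of_add_inv_eq {K : Type*} [Field K] {a b : K} (ha : a ≠ 0) (hb : b ≠ 0)
    (h : a + a⁻¹ = b + b⁻¹) : a = b ∨ a * b = 1 := by
  have hfac : (a - b) * (a * b - 1) = 0 := by
    field_simp at h
    linear_combination h
  rcases mul_eq_zero.mp hfac with hab | hab
  · exact .inl (sub_eq_zero.mp hab)
  · exact .inr (sub_eq_zero.mp hab)

namespace Complex

theorem ne_zero_of_im_pos {z : ℂ} (hz : 0 < z.im) : z ≠ 0 := by
  rintro rfl
  exact lt_irrefl 0 hz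

theorem im_inv_neg_of_im_pos {z : ℂ} (hz : 0 < z.im) : z⁻¹.im < 0 := by
  rw [inv_im]
  exact div_neg_of_neg_of_pos (neg_neg_of_pos hz) (normSq_pos.mpr (ne_zero_of_im_pos hz))

theorem injOn_add_inv_of_im_pos : Set.InjOn (fun z : ℂ => z + z⁻¹) {z | 0 < z.im} := by
  intro z hz w hw h
  rcases eq_or_mul_eq_one_of_add_inv_eq (ne_zero_of_im_pos hz) (ne_zero_of_im_pos hw) h
    with hzw | hzw
  · exact hzw
  · rw [eq_inv_of_mul_eq_one_right hzw] at hw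
    exact absurd hw (im_inv_neg_of_im_pos hz).not_gt

theorem re_mk_add_inv (x y : ℝ) :
    ((⟨x, y⟩ : ℂ) + (⟨x, y⟩ : ℂ)⁻¹).re = x + x / (x ^ 2 + y ^ 2) := by
  simp [inv_re, normSq_apply, pow_two]

theorem im_mk_add_inv (x y : ℝ) :
    ((⟨x, y⟩ : ℂ) + (⟨x, y⟩ : ℂ)⁻¹).im = y - y / (x ^ 2 + y ^ 2) := by
  simp [inv_im, normSq_apply, pow_two, neg_div, sub_eq_add_neg]

end Complex

theorem joukowski_real_inj_upper (x₁ y₁ x₂ y₂ : ℝ)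
    (h₁ : 0 < y₁) (h₂ : 0 < y₂)
    (hx : x₁ + x₁ / (x₁^2 + y₁^2) = x₂ + x₂ / (x₂^2 + y₂^2))
    (hy : y₁ - y₁ / (x₁^2 + y₁^2) = y₂ - y₂ / (x₂^2 + y₂^2)) :
    x₁ = x₂ ∧ y₁ = y₂ := by
  have h : (⟨x₁, y₁⟩ : ℂ) = ⟨x₂, y₂⟩ :=
    Complex.injOn_add_inv_of_im_pos h₁ h₂ <| Complex.ext
      (by simpa only [Complex.re_mk_add_inv] using hx)
      (by simpa only [Complex.im_mk_add_inv] using hy)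
  exact Complex.mk.inj h
end

section
/- For every z ∈ ℂ with |z| > 1, setting ζ = (1/2)(z + 1/z), we have ζ + √(ζ-1)·√(ζ+1) = z, where √ denotes the principal branch of the complex square root. -/
noncomputable def csqrt (z : ℂ) : ℂ := z ^ (1/2 : ℂ)

/-!
Put `u = √(ζ - 1)`, `v = √(ζ + 1)` and `w = ζ + u v`. Since `(u v)² = ζ² - 1`, `w` is a root of
`X² - 2ζX + 1 = (X - z)(X - 1/z)`, so `w = z` or `w = 1/z`; it remains to see `1 ≤ |w|`.
Now `(u + v)² = 2w` and `(u + v)(u - v) = -2`, so `1 ≤ |w|` amounts to `|u - v| ≤ |u + v|`, i.e.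
`0 ≤ Re(u v̄)`. This holds because principal square roots lie in `-π/2 < arg ≤ π/2` and
`Im u² = Im v²` (both equal `Im ζ`).
-/

open Complex ComplexConjugate

lemma csqrt_sq (x : ℂ) : csqrt x ^ 2 = x := by
  simp [csqrt, one_div, cpow_ofNat_inv_pow x 2]

lemma re_csqrt_nonneg (x : ℂ) : 0 ≤ (csqrt x).re := by
  rw [csqrt, one_div, cpow_inv_two_re]
  positivity

lemma re_csqrt_pos_or_im_csqrt_nonneg (x : ℂ) : 0 < (csqrt x).re ∨ 0 ≤ (csqrt x).im := by
  rw [csqrt, one_div]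
  rcases le_or_gt 0 x.im with hx | hx
  · exact .inr (cpow_inv_two_im_eq_sqrt hx ▸ Real.sqrt_nonneg _)
  · have : |x.re| < ‖x‖ := abs_re_lt_norm.2 hx.ne
    refine .inl (cpow_inv_two_re x ▸ Real.sqrt_pos.2 ?_)
    linarith [neg_abs_le x.re]

lemma re_mul_conj_nonneg_of_im_sq_eq {u v : ℂ} (hu₀ : 0 ≤ u.re) (hu : 0 < u.re ∨ 0 ≤ u.im)
    (hv₀ : 0 ≤ v.re) (hv : 0 < v.re ∨ 0 ≤ v.im) (h : (u ^ 2).im = (v ^ 2).im) :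
    0 ≤ (u * conj v).re := by
  have h' : u.re * u.im = v.re * v.im := by
    simp only [sq, mul_im] at h
    linarith
  rw [show (u * conj v).re = u.re * v.re + u.im * v.im by simp [mul_re]]
  rcases hu₀.eq_or_lt with hu₀ | hu₀ <;> rcases hv₀.eq_or_lt with hv₀ | hv₀
  · have := hu.resolve_left hu₀.not_lt
    have := hv.resolve_left hv₀.not_lt
    rw [← hu₀]
    positivity
  · have : v.im = 0 := by simpa [← hu₀, hv₀.ne'] using h'.symm
    simp [← hu₀, this]
  · have : u.im = 0 := by simpa [← hv₀, hu₀.ne'] using h'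
    simp [← hv₀, this]
  · have : 0 ≤ u.re * v.re * (u.re * v.re + u.im * v.im) := by
      rw [show u.re * v.re * (u.re * v.re + u.im * v.im)
          = (u.re * v.re) ^ 2 + (u.re * u.im) ^ 2 by linear_combination (-(u.re * u.im)) * h']
      positivity
    exact nonneg_of_mul_nonneg_right this (mul_pos hu₀ hv₀)

lemma norm_csqrt_sub_le_norm_csqrt_add {a b : ℂ} (h : a.im = b.im) :
    ‖csqrt a - csqrt b‖ ≤ ‖csqrt a + csqrt b‖ := by
  have hre := re_mul_conj_nonneg_of_im_sq_eq (re_csqrt_nonneg a)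
    (re_csqrt_pos_or_im_csqrt_nonneg a) (re_csqrt_nonneg b) (re_csqrt_pos_or_im_csqrt_nonneg b)
    (by rw [csqrt_sq, csqrt_sq, h])
  rw [← sq_le_sq₀ (norm_nonneg _) (norm_nonneg _), ← normSq_eq_norm_sq, ← normSq_eq_norm_sq,
    normSq_sub, normSq_add]
  linarith

lemma one_le_norm_add_csqrt_mul_csqrt (ζ : ℂ) : 1 ≤ ‖ζ + csqrt (ζ - 1) * csqrt (ζ + 1)‖ := by
  set u := csqrt (ζ - 1)
  set v := csqrt (ζ + 1)
  have hu : u ^ 2 = ζ - 1 := csqrt_sq _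
  have hv : v ^ 2 = ζ + 1 := csqrt_sq _
  have hsum : ‖u + v‖ ^ 2 = 2 * ‖ζ + u * v‖ := by
    rw [← norm_pow, show (u + v) ^ 2 = 2 * (ζ + u * v) by linear_combination hu + hv, norm_mul]
    norm_num
  have hprod : ‖u + v‖ * ‖u - v‖ = 2 := by
    rw [← norm_mul, show (u + v) * (u - v) = -2 by linear_combination hu - hv]
    norm_num
  have hle : ‖u - v‖ ≤ ‖u + v‖ := norm_csqrt_sub_le_norm_csqrt_add (by simp)
  nlinarith [mul_le_mul_of_nonneg_left hle (norm_nonneg (u + v))]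

theorem joukowski_left_inverse (z : ℂ) (hz : 1 < ‖z‖)
    (ζ : ℂ) (hζ : ζ = (1/2) * (z + 1/z)) :
    ζ + csqrt (ζ - 1) * csqrt (ζ + 1) = z := by
  have hz₀ : z ≠ 0 := norm_pos_iff.mp (one_pos.trans hz)
  have hw := one_le_norm_add_csqrt_mul_csqrt ζ
  set w := ζ + csqrt (ζ - 1) * csqrt (ζ + 1)
  have hroot : (w - z) * (w - z⁻¹) = 0 := by
    have hsq : (csqrt (ζ - 1) * csqrt (ζ + 1)) ^ 2 = ζ ^ 2 - 1 := by
      rw [mul_pow, csqrt_sq, csqrt_sq]; ring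
    rw [one_div] at hζ
    linear_combination hsq + 2 * w * hζ + mul_inv_cancel₀ hz₀
  rcases mul_eq_zero.1 hroot with h | h
  · exact sub_eq_zero.1 h
  · have : ‖w‖ < 1 := by
      rw [sub_eq_zero.1 h, norm_inv]
      exact inv_lt_one_of_one_lt₀ hz
    exact absurd hw this.not_ge
end
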